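/- arXiv:2307.15869 — 3 statements merged into one kernel-verified Lean document; each statement's English description precedes it below -/
import Mathlib

section
/- Let X be a real locally convex topological vector space and let Ω ⊂ X be any (not necessarily convex) subset. Then ri(Ω) ⊂ sqri(Ω) ⊂ iri(Ω) ⊂ qri(Ω) and ri(Ω) ⊂ rint(Ω) ⊂ iri(Ω). Moreover, if Ω is convex and ri(Ω) ≠ ∅, then all of these inclusions are equalities. -/
open Pointwise Set

/-- Conic hull: `cone(A) = {λa : λ ≥ 0, a ∈ A}`. -/
def coneHull {Z : Type*} [AddCommGroup Z] [Module ℝ Z] (A : Set Z) : Set Z :=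
  {y | ∃ c : ℝ, 0 ≤ c ∧ ∃ a ∈ A, y = c • a}

/-- A set is a linear subspace if it underlies some `ℝ`-submodule. -/
def IsLinearSubspace {Z : Type*} [AddCommGroup Z] [Module ℝ Z] (S : Set Z) : Prop :=
  ∃ L : Submodule ℝ Z, (L : Set Z) = S

/-- Intrinsic relative interior. -/
def iri {Z : Type*} [AddCommGroup Z] [Module ℝ Z] (A : Set Z) : Set Z :=
  {x ∈ A | IsLinearSubspace (coneHull (A - {x}))}

/-- Strong quasi-relative interior. -/
def sqri {Z : Type*} [AddCommGroup Z] [Module ℝ Z] [TopologicalSpace Z] (A : Set Z) : Set Z :=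
  {x ∈ A | IsLinearSubspace (coneHull (A - {x})) ∧ IsClosed (coneHull (A - {x}))}

/-- Quasi-relative interior. -/
def qri {Z : Type*} [AddCommGroup Z] [Module ℝ Z] [TopologicalSpace Z] (A : Set Z) : Set Z :=
  {x ∈ A | IsLinearSubspace (closure (coneHull (A - {x})))}

/-- Interior of a set relative to its affine hull. -/
def rint {X : Type*} [AddCommGroup X] [Module ℝ X] [TopologicalSpace X] (A : Set X) : Set X :=
  {x ∈ A | ∃ V ∈ nhds (0 : X), ∀ v ∈ V, x + v ∈ (affineSpan ℝ A : Set X) → x + v ∈ A}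

/-- Interior of a set relative to the closure of its affine hull. -/
def ri {X : Type*} [AddCommGroup X] [Module ℝ X] [TopologicalSpace X] (A : Set X) : Set X :=
  {x ∈ A | ∃ V ∈ nhds (0 : X), ∀ v ∈ V, x + v ∈ closure (affineSpan ℝ A : Set X) → x + v ∈ A}

/-!
Both relative interiors are detected by the submodule `L = vectorSpan ℝ Ω`, resp. its closure:
`x ∈ rint Ω` (resp. `ri Ω`) iff `x + v ∈ Ω` for all small `v ∈ L`. Scaling such `v` shows that
`cone(Ω - x)` is all of `L`, which gives the chain of inclusions.

For the converse when `Ω` is convex and `x₀ ∈ ri Ω`: if `x ∈ qri Ω`, then `x₀ - x` lies in the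
subspace `cl cone(Ω - x)`, and so does `-2(x₀ - x)`; approximating the latter by `k ∈ cone(Ω - x)`,
the point `x₀ - (k + 2(x₀ - x))` lies in `Ω`, and adding `k` shows `x - x₀ ∈ cone(Ω - x)`. Hence `x`
lies on a segment `[x₀, ω)` with `ω ∈ Ω`, and such segments stay in `ri Ω`.
-/

section coneHull

variable {X : Type*} [AddCommGroup X] [Module ℝ X] {A : Set X}

lemma smul_mem_coneHull {c : ℝ} (hc : 0 ≤ c) {a : X} (ha : a ∈ A) : c • a ∈ coneHull A :=
  ⟨c, hc, a, ha, rfl⟩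

lemma mem_coneHull_of_mem {a : X} (ha : a ∈ A) : a ∈ coneHull A := by
  simpa using smul_mem_coneHull zero_le_one ha

lemma coneHull_subset_submodule {L : Submodule ℝ X} (h : A ⊆ L) : coneHull A ⊆ L := by
  rintro _ ⟨c, -, a, ha, rfl⟩
  exact L.smul_mem c (h ha)

lemma Convex.add_mem_coneHull (hA : Convex ℝ A) {y z : X} (hy : y ∈ coneHull A)
    (hz : z ∈ coneHull A) : y + z ∈ coneHull A := by
  obtain ⟨c, hc, a, ha, rfl⟩ := hy
  obtain ⟨d, hd, b, hb, rfl⟩ := hz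
  rcases hc.eq_or_lt with rfl | hc
  · simpa using smul_mem_coneHull hd hb
  rcases hd.eq_or_lt with rfl | hd
  · simpa using smul_mem_coneHull hc.le ha
  have hmem : ∀ {e : ℝ} {w : X}, 0 < e → w ∈ A → e • w ∈ ConvexCone.hull ℝ A := fun he hw =>
    (ConvexCone.mem_hull_of_convex hA).2 ⟨_, he, smul_mem_smul_set hw⟩
  obtain ⟨e, he, w, hw, hsum⟩ :=
    (ConvexCone.mem_hull_of_convex hA).1 ((ConvexCone.hull ℝ A).add_mem (hmem hc ha) (hmem hd hb))
  exact ⟨e, he.le, w, hw, hsum.symm⟩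

lemma mem_coneHull_sub_singleton_of_add_smul_mem {x y : X} {t : ℝ} (ht : 0 < t)
    (h : x + t • y ∈ A) : y ∈ coneHull (A - {x}) := by
  have hy : t⁻¹ • (x + t • y - x) = y := by
    rw [add_sub_cancel_left, smul_smul, inv_mul_cancel₀ ht.ne', one_smul]
  exact hy ▸ smul_mem_coneHull (inv_nonneg.2 ht.le) (sub_mem_sub h rfl)

lemma coneHull_sub_singleton_subset_vectorSpan {x : X} (hx : x ∈ A) :
    coneHull (A - {x}) ⊆ vectorSpan ℝ A := by
  refine coneHull_subset_submodule ?_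
  rintro _ ⟨a, ha, _, rfl, rfl⟩
  exact vsub_mem_vectorSpan ℝ ha hx

lemma add_mem_affineSpan_iff {x : X} (hx : x ∈ A) {v : X} :
    x + v ∈ (affineSpan ℝ A : Set X) ↔ v ∈ vectorSpan ℝ A := by
  rw [← direction_affineSpan, ← AffineSubspace.vadd_mem_iff_mem_direction v (mem_affineSpan ℝ hx),
    vadd_eq_add, add_comm, SetLike.mem_coe]

end coneHull

section relativeInterior

variable {X : Type*} [AddCommGroup X] [Module ℝ X] [TopologicalSpace X] {A : Set X} {x : X}

lemma mem_rint_iff :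
    x ∈ rint A ↔ x ∈ A ∧ ∃ V ∈ nhds (0 : X), ∀ v ∈ V, v ∈ vectorSpan ℝ A → x + v ∈ A := by
  refine and_congr_right fun hx => ?_
  simp only [add_mem_affineSpan_iff hx]

lemma mem_ri_iff [ContinuousAdd X] :
    x ∈ ri A ↔ x ∈ A ∧
      ∃ V ∈ nhds (0 : X), ∀ v ∈ V, v ∈ closure (vectorSpan ℝ A : Set X) → x + v ∈ A := by
  refine and_congr_right fun hx => ?_
  have hpre : (x + ·) ⁻¹' closure (affineSpan ℝ A : Set X) = closure (vectorSpan ℝ A : Set X) := by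
    rw [← Homeomorph.coe_addLeft, Homeomorph.preimage_closure]
    congr 1
    ext v
    exact add_mem_affineSpan_iff hx
  simp only [← hpre, mem_preimage]

lemma ri_subset_rint : ri A ⊆ rint A := fun _ ⟨hx, V, hV, h⟩ =>
  ⟨hx, V, hV, fun v hv hmem => h v hv (subset_closure hmem)⟩

lemma coe_subset_coneHull_sub_singleton [ContinuousSMul ℝ X] {L : Submodule ℝ X}
    (h : ∃ V ∈ nhds (0 : X), ∀ v ∈ V, v ∈ L → x + v ∈ A) : (L : Set X) ⊆ coneHull (A - {x}) := by
  obtain ⟨V, hV, hVA⟩ := h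
  intro y hy
  have hsmall : ∀ᶠ t in nhdsWithin (0 : ℝ) (Ioi 0), t • y ∈ V := by
    refine (tendsto_nhdsWithin_of_tendsto_nhds ?_).eventually hV
    exact Continuous.tendsto' (by fun_prop) 0 0 (zero_smul ℝ y)
  obtain ⟨t, htV, ht⟩ := (hsmall.and self_mem_nhdsWithin).exists
  exact mem_coneHull_sub_singleton_of_add_smul_mem ht (hVA _ htV (L.smul_mem t hy))

lemma coneHull_sub_singleton_eq_of_mem_rint [ContinuousSMul ℝ X] (hx : x ∈ rint A) :
    coneHull (A - {x}) = vectorSpan ℝ A :=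
  (coneHull_sub_singleton_subset_vectorSpan hx.1).antisymm
    (coe_subset_coneHull_sub_singleton (mem_rint_iff.1 hx).2)

lemma coneHull_sub_singleton_eq_of_mem_ri [ContinuousAdd X] [ContinuousSMul ℝ X]
    (hx : x ∈ ri A) : coneHull (A - {x}) = (vectorSpan ℝ A).topologicalClosure := by
  refine ((coneHull_sub_singleton_subset_vectorSpan hx.1).trans
    (vectorSpan ℝ A).le_topologicalClosure).antisymm
    (coe_subset_coneHull_sub_singleton ?_)
  simpa only [← SetLike.mem_coe, Submodule.topologicalClosure_coe] using (mem_ri_iff.1 hx).2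

lemma ri_subset_sqri [ContinuousAdd X] [ContinuousSMul ℝ X] : ri A ⊆ sqri A := by
  intro x hx
  have hcone := coneHull_sub_singleton_eq_of_mem_ri hx
  refine ⟨hx.1, ⟨_, hcone.symm⟩, ?_⟩
  rw [hcone]
  exact (vectorSpan ℝ A).isClosed_topologicalClosure

lemma sqri_subset_iri : sqri A ⊆ iri A := fun _ hx => ⟨hx.1, hx.2.1⟩

lemma iri_subset_qri [ContinuousAdd X] [ContinuousConstSMul ℝ X] : iri A ⊆ qri A := by
  rintro x ⟨hx, L, hL⟩
  exact ⟨hx, L.topologicalClosure, by rw [Submodule.topologicalClosure_coe, hL]⟩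

lemma rint_subset_iri [ContinuousSMul ℝ X] : rint A ⊆ iri A := fun _ hx =>
  ⟨hx.1, _, (coneHull_sub_singleton_eq_of_mem_rint hx).symm⟩

lemma Convex.combo_ri_self_mem_ri [ContinuousAdd X] [ContinuousConstSMul ℝ X]
    (hA : Convex ℝ A) {y : X} (hx : x ∈ ri A) (hy : y ∈ A) {a b : ℝ} (ha : 0 < a) (hb : 0 ≤ b)
    (hab : a + b = 1) : a • x + b • y ∈ ri A := by
  obtain ⟨hxA, V, hV, hVA⟩ := mem_ri_iff.1 hx
  refine mem_ri_iff.2 ⟨hA hxA hy ha.le hb hab, a • V, (set_smul_mem_nhds_zero_iff ha.ne').2 hV, ?_⟩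
  rintro _ ⟨u, hu, rfl⟩ hau
  have hu' : u ∈ (vectorSpan ℝ A).topologicalClosure := by
    simpa [smul_smul, ha.ne'] using
      (vectorSpan ℝ A).topologicalClosure.smul_mem a⁻¹ (show a • u ∈ _ from hau)
  have hcombo := hA (hVA u hu hu') hy ha.le hb hab
  rwa [smul_add, add_right_comm] at hcombo

lemma Convex.sub_mem_coneHull_of_mem_qri [IsTopologicalAddGroup X] (hA : Convex ℝ A)
    {x₀ : X} (hx₀ : x₀ ∈ ri A) (hx : x ∈ qri A) : x - x₀ ∈ coneHull (A - {x}) := by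
  obtain ⟨hx₀A, V, hV, hVA⟩ := mem_ri_iff.1 hx₀
  obtain ⟨hxA, L, hL⟩ := hx
  set p := x₀ - x
  have hp : p ∈ A - {x} := sub_mem_sub hx₀A rfl
  have hpL : p ∈ L := by
    rw [← SetLike.mem_coe, hL]
    exact subset_closure (mem_coneHull_of_mem hp)
  have h2p : (-2 : ℝ) • p ∈ closure (coneHull (A - {x})) := hL ▸ L.smul_mem _ hpL
  have hU : (fun z => -(z + (2 : ℝ) • p)) ⁻¹' V ∈ nhds ((-2 : ℝ) • p) := by
    refine (Continuous.continuousAt (by fun_prop)).preimage_mem_nhds ?_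
    convert hV using 2
    module
  obtain ⟨k, hkV, hk⟩ := mem_closure_iff_nhds.1 h2p _ hU
  have hspan : -(k + (2 : ℝ) • p) ∈ vectorSpan ℝ A :=
    neg_mem (add_mem (coneHull_sub_singleton_subset_vectorSpan hxA hk)
      (Submodule.smul_mem _ _ (vsub_mem_vectorSpan ℝ hx₀A hxA)))
  have hback : -k - p ∈ coneHull (A - {x}) := by
    refine mem_coneHull_of_mem ⟨_, hVA _ hkV (subset_closure hspan), x, rfl, ?_⟩
    simp only [p]
    module
  have hsum := (hA.sub (convex_singleton x)).add_mem_coneHull hback hk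
  convert hsum using 1
  simp only [p]
  abel

lemma Convex.qri_subset_ri [IsTopologicalAddGroup X] [ContinuousConstSMul ℝ X] (hA : Convex ℝ A)
    (hne : (ri A).Nonempty) : qri A ⊆ ri A := by
  obtain ⟨x₀, hx₀⟩ := hne
  intro x hx
  obtain ⟨c, hc, _, ⟨ω, hω, y, hy, rfl⟩, hxc⟩ := hA.sub_mem_coneHull_of_mem_qri hx₀ hx
  rw [mem_singleton_iff.1 hy] at hxc
  have hc1 : (1 + c) ≠ 0 := by positivity
  have hseg : x = (1 + c)⁻¹ • x₀ + (c / (1 + c)) • ω := calc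
    x = (1 + c)⁻¹ • ((1 + c) • x) := by rw [smul_smul, inv_mul_cancel₀ hc1, one_smul]
    _ = (1 + c)⁻¹ • (x₀ + c • ω) := by congr 1; linear_combination (norm := module) hxc
    _ = (1 + c)⁻¹ • x₀ + (c / (1 + c)) • ω := by rw [smul_add, smul_smul, inv_mul_eq_div]
  rw [hseg]
  exact hA.combo_ri_self_mem_ri hx₀ hω (by positivity) (by positivity) (by field_simp)

end relativeInterior

theorem stmt1_general {X : Type*} [AddCommGroup X] [Module ℝ X] [TopologicalSpace X]
    [IsTopologicalAddGroup X] [ContinuousSMul ℝ X] (Ω : Set X) :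
    ri Ω ⊆ sqri Ω ∧ sqri Ω ⊆ iri Ω ∧ iri Ω ⊆ qri Ω ∧
    ri Ω ⊆ rint Ω ∧ rint Ω ⊆ iri Ω ∧
    (Convex ℝ Ω → (ri Ω).Nonempty →
      (ri Ω = sqri Ω ∧ sqri Ω = iri Ω ∧ iri Ω = qri Ω ∧ ri Ω = rint Ω ∧ rint Ω = iri Ω)) := by
  have h₁ : ri Ω ⊆ sqri Ω := ri_subset_sqri
  have h₂ : sqri Ω ⊆ iri Ω := sqri_subset_iri
  have h₃ : iri Ω ⊆ qri Ω := iri_subset_qri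
  have h₄ : ri Ω ⊆ rint Ω := ri_subset_rint
  have h₅ : rint Ω ⊆ iri Ω := rint_subset_iri
  refine ⟨h₁, h₂, h₃, h₄, h₅, fun hΩ hne => ?_⟩
  have h₆ : qri Ω ⊆ ri Ω := hΩ.qri_subset_ri hne
  exact ⟨h₁.antisymm (h₂.trans (h₃.trans h₆)), h₂.antisymm (h₃.trans (h₆.trans h₁)),
    h₃.antisymm (h₆.trans (h₁.trans h₂)), h₄.antisymm (h₅.trans (h₃.trans h₆)),
    h₅.antisymm (h₃.trans (h₆.trans h₄))⟩

theorem stmt1 {X : Type*} [AddCommGroup X] [Module ℝ X] [TopologicalSpace X]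
    [IsTopologicalAddGroup X] [ContinuousSMul ℝ X] [LocallyConvexSpace ℝ X] (Ω : Set X) :
    ri Ω ⊆ sqri Ω ∧ sqri Ω ⊆ iri Ω ∧ iri Ω ⊆ qri Ω ∧
    ri Ω ⊆ rint Ω ∧ rint Ω ⊆ iri Ω ∧
    (Convex ℝ Ω → (ri Ω).Nonempty →
      (ri Ω = sqri Ω ∧ sqri Ω = iri Ω ∧ iri Ω = qri Ω ∧ ri Ω = rint Ω ∧ rint Ω = iri Ω)) :=
  stmt1_general Ω
end

section
/- Let X be a real locally convex topological vector space, let Ω ⊂ X be a nonempty convex set, and let w ∈ Ω. Then: (a) aff(Ω) − w = cone(Ω−Ω); (b) cone(Ω−Ω) is the linear subspace parallel to aff(Ω); (c) aff(Ω) − w = cone(Ω−w) if and only if cone(Ω−w) is a linear subspace of X; (d) cl(aff(Ω)) − w = cl(cone(Ω−w)) if and only if cl(cone(Ω−w)) is a linear subspace of X. -/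
open Pointwise Set

section coneHull

variable {Z : Type*} [AddCommGroup Z] [Module ℝ Z] {C : Set Z} {x y : Z}

lemma subset_coneHull : C ⊆ coneHull C :=
  fun a ha ↦ ⟨1, zero_le_one, a, ha, (one_smul ℝ a).symm⟩

lemma coneHull_subset_span : coneHull C ⊆ Submodule.span ℝ C := by
  rintro _ ⟨c, -, a, ha, rfl⟩
  exact Submodule.smul_mem _ c (Submodule.subset_span ha)

lemma zero_mem_coneHull (hC : C.Nonempty) : (0 : Z) ∈ coneHull C :=
  let ⟨a, ha⟩ := hC
  ⟨0, le_rfl, a, ha, (zero_smul ℝ a).symm⟩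

lemma Convex.add_mem_coneHull_s4 (hC : Convex ℝ C) (hx : x ∈ coneHull C) (hy : y ∈ coneHull C) :
    x + y ∈ coneHull C := by
  obtain ⟨c, hc, a, ha, rfl⟩ := hx
  obtain ⟨d, hd, b, hb, rfl⟩ := hy
  rcases (add_nonneg hc hd).eq_or_lt with hcd | hcd
  · obtain ⟨rfl, rfl⟩ : c = 0 ∧ d = 0 := ⟨by linarith, by linarith⟩
    exact ⟨0, le_rfl, a, ha, by simp⟩
  · -- `c • a + d • b = (c + d) • z` with `z` the convex combination of `a` and `b` of weights `c : d`
    refine ⟨c + d, hcd.le, _, convex_iff_div.1 hC ha hb hc hd hcd, ?_⟩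
    simp only [smul_add, smul_smul, mul_div_cancel₀ _ hcd.ne']

lemma smul_mem_coneHull_s4 (hneg : ∀ a ∈ C, -a ∈ C) (r : ℝ) (hx : x ∈ coneHull C) :
    r • x ∈ coneHull C := by
  obtain ⟨c, hc, a, ha, rfl⟩ := hx
  rcases le_total 0 r with hr | hr
  · exact ⟨r * c, mul_nonneg hr hc, a, ha, smul_smul r c a⟩
  · exact ⟨-r * c, mul_nonneg (neg_nonneg.2 hr) hc, -a, hneg a ha, by module⟩

lemma Convex.coneHull_eq_span (hC : Convex ℝ C) (hneg : ∀ a ∈ C, -a ∈ C) (hne : C.Nonempty) :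
    coneHull C = Submodule.span ℝ C := by
  refine coneHull_subset_span.antisymm fun x hx ↦ ?_
  induction hx using Submodule.span_induction with
  | mem x hx => exact subset_coneHull hx
  | zero => exact zero_mem_coneHull hne
  | add x y _ _ hx hy => exact hC.add_mem_coneHull_s4 hx hy
  | smul r x _ hx => exact smul_mem_coneHull_s4 hneg r hx

lemma Convex.coneHull_sub_self_eq_vectorSpan {Ω : Set Z} (hΩ : Convex ℝ Ω) (hne : Ω.Nonempty) :
    coneHull (Ω - Ω) = vectorSpan ℝ Ω := by
  rw [vectorSpan_def]
  refine (hΩ.sub hΩ).coneHull_eq_span ?_ (hne.sub hne)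
  rintro _ ⟨u, hu, v, hv, rfl⟩
  exact ⟨v, hv, u, hu, (neg_sub u v).symm⟩

end coneHull

section LinearSubspace

variable {Z : Type*} [AddCommGroup Z] [Module ℝ Z] {S K : Set Z}

lemma span_eq_iff_isLinearSubspace (hSK : S ⊆ K) (hK : K ⊆ Submodule.span ℝ S) :
    (Submodule.span ℝ S : Set Z) = K ↔ IsLinearSubspace K := by
  refine ⟨fun h ↦ ⟨_, h⟩, ?_⟩
  rintro ⟨L, rfl⟩
  exact congrArg _ ((Submodule.span_le.2 hSK).antisymm hK)

lemma closure_span_eq_iff_isLinearSubspace [TopologicalSpace Z] [ContinuousAdd Z]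
    [ContinuousConstSMul ℝ Z] (hSK : S ⊆ K)
    (hK : K ⊆ closure (Submodule.span ℝ S)) (hKc : IsClosed K) :
    closure (Submodule.span ℝ S : Set Z) = K ↔ IsLinearSubspace K := by
  refine ⟨fun h ↦ ⟨(Submodule.span ℝ S).topologicalClosure, h⟩, ?_⟩
  rintro ⟨L, rfl⟩
  exact (closure_minimal (Submodule.span_le.2 hSK) hKc).antisymm hK

end LinearSubspace

lemma AffineSubspace.coe_sub_singleton {k V : Type*} [Ring k] [AddCommGroup V] [Module k V]
    {s : AffineSubspace k V} {p : V} (hp : p ∈ s) : (s : Set V) - {p} = s.direction := by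
  rw [coe_direction_eq_vsub_set_right hp, sub_singleton]
  rfl

lemma AffineSubspace.coe_eq_vadd_direction {k V : Type*} [Ring k] [AddCommGroup V] [Module k V]
    {s : AffineSubspace k V} {p : V} (hp : p ∈ s) : (s : Set V) = p +ᵥ (s.direction : Set V) := by
  rw [← s.coe_sub_singleton hp, sub_singleton, ← image_vadd, image_image]
  simp

lemma closure_sub_singleton {G : Type*} [TopologicalSpace G] [AddGroup G] [IsTopologicalAddGroup G]
    (s : Set G) (w : G) : closure s - {w} = closure (s - {w}) := by
  rw [sub_singleton, sub_singleton]
  exact (Homeomorph.subRight w).image_closure s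

theorem stmt4_general {X : Type*} [AddCommGroup X] [Module ℝ X] [TopologicalSpace X]
    [IsTopologicalAddGroup X] [ContinuousSMul ℝ X]
    (Ω : Set X) (hconv : Convex ℝ Ω) (w : X) (hw : w ∈ Ω) :
    ((affineSpan ℝ Ω : Set X) - {w} = coneHull (Ω - Ω)) ∧
    (∃ L : Submodule ℝ X, (L : Set X) = coneHull (Ω - Ω) ∧
      ∃ x₀ ∈ (affineSpan ℝ Ω : Set X), (affineSpan ℝ Ω : Set X) = x₀ +ᵥ (L : Set X)) ∧
    ((affineSpan ℝ Ω : Set X) - {w} = coneHull (Ω - {w}) ↔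
      IsLinearSubspace (coneHull (Ω - {w}))) ∧
    (closure (affineSpan ℝ Ω : Set X) - {w} = closure (coneHull (Ω - {w})) ↔
      IsLinearSubspace (closure (coneHull (Ω - {w})))) := by
  have hwA : w ∈ affineSpan ℝ Ω := mem_affineSpan ℝ hw
  have hcone : coneHull (Ω - Ω) = vectorSpan ℝ Ω := hconv.coneHull_sub_self_eq_vectorSpan ⟨w, hw⟩
  have hdir : (affineSpan ℝ Ω : Set X) - {w} = vectorSpan ℝ Ω := by
    rw [(affineSpan ℝ Ω).coe_sub_singleton hwA, direction_affineSpan]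
  have hspan : vectorSpan ℝ Ω = Submodule.span ℝ (Ω - {w}) := by
    rw [vectorSpan_eq_span_vsub_set_right ℝ hw, sub_singleton]
    rfl
  refine ⟨hdir.trans hcone.symm, ⟨_, hcone.symm, w, hwA, ?_⟩, ?_, ?_⟩
  · rw [(affineSpan ℝ Ω).coe_eq_vadd_direction hwA, direction_affineSpan]
  · rw [hdir, hspan]
    exact span_eq_iff_isLinearSubspace subset_coneHull coneHull_subset_span
  · rw [closure_sub_singleton, hdir, hspan]
    exact closure_span_eq_iff_isLinearSubspace (subset_coneHull.trans subset_closure)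
      (closure_mono coneHull_subset_span) isClosed_closure

theorem stmt4 {X : Type*} [AddCommGroup X] [Module ℝ X] [TopologicalSpace X]
    [IsTopologicalAddGroup X] [ContinuousSMul ℝ X] [LocallyConvexSpace ℝ X]
    (Ω : Set X) (hne : Ω.Nonempty) (hconv : Convex ℝ Ω) (w : X) (hw : w ∈ Ω) :
    ((affineSpan ℝ Ω : Set X) - {w} = coneHull (Ω - Ω)) ∧
    (∃ L : Submodule ℝ X, (L : Set X) = coneHull (Ω - Ω) ∧
      ∃ x₀ ∈ (affineSpan ℝ Ω : Set X), (affineSpan ℝ Ω : Set X) = x₀ +ᵥ (L : Set X)) ∧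
    ((affineSpan ℝ Ω : Set X) - {w} = coneHull (Ω - {w}) ↔
      IsLinearSubspace (coneHull (Ω - {w}))) ∧
    (closure (affineSpan ℝ Ω : Set X) - {w} = closure (coneHull (Ω - {w})) ↔
      IsLinearSubspace (closure (coneHull (Ω - {w})))) :=
  stmt4_general Ω hconv w hw
end

section
/- Let X be a real locally convex topological vector space, let Ω ⊂ X be a quasi-nearly convex set, and let x̄ ∈ Ω. Then x̄ ∉ qri(Ω) if and only if the sets {x̄} and Ω can be properly separated by a closed hyperplane, i.e., there exists a nonzero x* ∈ X* such that ⟨x*, x⟩ ≤ ⟨x*, x̄⟩ for all x ∈ Ω and ⟨x*, x̂⟩ < ⟨x*, x̄⟩ for some x̂ ∈ Ω. -/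
open Pointwise Set

/-- A set is quasi-nearly convex if it is squeezed between a convex set with
nonempty quasi-relative interior and its closure. -/
def QuasiNearlyConvex {Z : Type*} [AddCommGroup Z] [Module ℝ Z] [TopologicalSpace Z]
    (A : Set Z) : Prop :=
  ∃ C : Set Z, Convex ℝ C ∧ (qri C).Nonempty ∧ C ⊆ A ∧ A ⊆ closure C

/-!
Let `K = cl cone(Ω - x̄)`. Since `C ⊆ Ω ⊆ cl C`, `K` is also the closure of `cone(C - x̄)`, so it
is a closed convex cone. Functionals `f` with `f ≤ f x̄` on `Ω` are exactly those with `f ≤ 0` on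
`K`. If `K` is not a subspace, some `v ∈ K` has `-v ∉ K`; separating `-v` from the cone `K` gives
`f ≤ 0` on `K` and `f v < 0`, and as `v` is a limit of elements `c (x̂ - x̄)` this yields `x̂ ∈ Ω`
with `f x̂ < f x̄`. Conversely, if `K` is a subspace, then `f ≤ 0` on `K` forces `f = 0` on `K`,
so `f` is constant on `Ω` and the separation cannot be proper.
-/

section ConeHull

variable {Z : Type*} [AddCommGroup Z] [Module ℝ Z]

lemma coneHull_mono {A B : Set Z} (h : A ⊆ B) : coneHull A ⊆ coneHull B := by
  rintro _ ⟨c, hc, a, ha, rfl⟩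
  exact ⟨c, hc, a, h ha, rfl⟩

lemma subset_coneHull_s15 (A : Set Z) : A ⊆ coneHull A :=
  fun a ha => ⟨1, zero_le_one, a, ha, (one_smul ℝ a).symm⟩

lemma smul_mem_coneHull_s15 {A : Set Z} {c : ℝ} (hc : 0 ≤ c) {y : Z} (hy : y ∈ coneHull A) :
    c • y ∈ coneHull A := by
  obtain ⟨d, hd, a, ha, rfl⟩ := hy
  exact ⟨c * d, mul_nonneg hc hd, a, ha, smul_smul c d a⟩

lemma convex_coneHull {A : Set Z} (hA : Convex ℝ A) : Convex ℝ (coneHull A) := by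
  rintro _ ⟨c₁, hc₁, a₁, ha₁, rfl⟩ _ ⟨c₂, hc₂, a₂, ha₂, rfl⟩ s t hs ht hst
  rcases (add_nonneg (mul_nonneg hs hc₁) (mul_nonneg ht hc₂)).eq_or_lt with hr | hr
  · obtain ⟨h₁, h₂⟩ :=
      (add_eq_zero_iff_of_nonneg (mul_nonneg hs hc₁) (mul_nonneg ht hc₂)).1 hr.symm
    exact ⟨0, le_rfl, a₁, ha₁, by simp [smul_smul, h₁, h₂]⟩
  · -- the combination is `r • b`, with `r = s c₁ + t c₂` and `b` a convex combination of `a₁, a₂`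
    refine ⟨s * c₁ + t * c₂, hr.le, (s * c₁ / (s * c₁ + t * c₂)) • a₁ +
      (t * c₂ / (s * c₁ + t * c₂)) • a₂, hA ha₁ ha₂ (by positivity) (by positivity)
      (by field_simp), ?_⟩
    simp only [smul_add, smul_smul, mul_div_cancel₀ _ hr.ne']

end ConeHull

section ClosedCone

variable {Z : Type*} [AddCommGroup Z] [Module ℝ Z] {K : Set Z}

lemma add_mem_of_convex_of_smul_mem (hKconv : Convex ℝ K)
    (hKsmul : ∀ c : ℝ, 0 ≤ c → ∀ y ∈ K, c • y ∈ K) {a b : Z} (ha : a ∈ K) (hb : b ∈ K) :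
    a + b ∈ K := by
  have hmid := hKconv ha hb (by norm_num : (0 : ℝ) ≤ 1 / 2) (by norm_num : (0 : ℝ) ≤ 1 / 2)
    (by norm_num)
  convert hKsmul 2 zero_le_two _ hmid using 1
  module

lemma isLinearSubspace_of_neg_mem (hKconv : Convex ℝ K) (hK0 : (0 : Z) ∈ K)
    (hKsmul : ∀ c : ℝ, 0 ≤ c → ∀ y ∈ K, c • y ∈ K) (hKneg : ∀ y ∈ K, -y ∈ K) :
    IsLinearSubspace K := by
  refine ⟨{ carrier := K
            add_mem' := add_mem_of_convex_of_smul_mem hKconv hKsmul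
            zero_mem' := hK0
            smul_mem' := fun c y hy => ?_ }, rfl⟩
  rcases le_or_gt 0 c with hc | hc
  · exact hKsmul c hc y hy
  · simpa using hKsmul (-c) (by linarith) (-y) (hKneg y hy)

lemma exists_map_nonpos_and_pos_of_notMem [TopologicalSpace Z] [IsTopologicalAddGroup Z]
    [ContinuousSMul ℝ Z] [LocallyConvexSpace ℝ Z] (hKclosed : IsClosed K) (hKconv : Convex ℝ K)
    (hK0 : (0 : Z) ∈ K) (hKsmul : ∀ c : ℝ, 0 ≤ c → ∀ y ∈ K, c • y ∈ K) {w : Z} (hw : w ∉ K) :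
    ∃ f : Z →L[ℝ] ℝ, (∀ y ∈ K, f y ≤ 0) ∧ 0 < f w := by
  obtain ⟨f, u, hfK, hfw⟩ := geometric_hahn_banach_closed_point hKconv hKclosed hw
  have hu : 0 < u := by simpa using hfK 0 hK0
  refine ⟨f, fun y hy => ?_, hu.trans hfw⟩
  by_contra! hfy
  -- rescaling `y` by `u / f y > 0` stays in `K` and lands on the level `u`
  have := hfK _ (hKsmul (u / f y) (div_nonneg hu.le hfy.le) y hy)
  rw [map_smul, smul_eq_mul, div_mul_cancel₀ _ hfy.ne'] at this
  exact lt_irrefl u this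

lemma exists_map_nonpos_and_neg_of_not_isLinearSubspace [TopologicalSpace Z]
    [IsTopologicalAddGroup Z] [ContinuousSMul ℝ Z] [LocallyConvexSpace ℝ Z]
    (hKclosed : IsClosed K) (hKconv : Convex ℝ K) (hK0 : (0 : Z) ∈ K)
    (hKsmul : ∀ c : ℝ, 0 ≤ c → ∀ y ∈ K, c • y ∈ K) (hK : ¬ IsLinearSubspace K) :
    ∃ f : Z →L[ℝ] ℝ, (∀ y ∈ K, f y ≤ 0) ∧ ∃ v ∈ K, f v < 0 := by
  obtain ⟨v, hvK, hv⟩ : ∃ v ∈ K, -v ∉ K := by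
    by_contra! hKneg
    exact hK (isLinearSubspace_of_neg_mem hKconv hK0 hKsmul hKneg)
  obtain ⟨f, hfK, hfv⟩ := exists_map_nonpos_and_pos_of_notMem hKclosed hKconv hK0 hKsmul hv
  exact ⟨f, hfK, v, hvK, by simpa using hfv⟩

end ClosedCone

lemma sub_singleton_subset_closure {Z : Type*} [AddGroup Z] [TopologicalSpace Z] [ContinuousSub Z]
    {A B : Set Z} (h : B ⊆ closure A) (x : Z) :
    B - {x} ⊆ closure (A - {x}) := by
  rw [sub_singleton, sub_singleton]
  rintro _ ⟨b, hb, rfl⟩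
  exact map_mem_closure (f := (· - x)) (continuous_id.sub continuous_const) (h hb)
    (mapsTo_image _ A)

section ClosureConeHull

variable {Z : Type*} [AddCommGroup Z] [Module ℝ Z] [TopologicalSpace Z]

lemma smul_mem_closure_coneHull [ContinuousConstSMul ℝ Z] {A : Set Z} {c : ℝ} (hc : 0 ≤ c)
    {y : Z} (hy : y ∈ closure (coneHull A)) : c • y ∈ closure (coneHull A) :=
  map_mem_closure (continuous_const_smul c) hy fun _ hz => smul_mem_coneHull_s15 hc hz

lemma closure_coneHull_eq_of_subset_closure [ContinuousConstSMul ℝ Z] {A B : Set Z}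
    (hAB : A ⊆ B) (hBA : B ⊆ closure A) : closure (coneHull B) = closure (coneHull A) := by
  refine subset_antisymm (closure_minimal ?_ isClosed_closure) (closure_mono (coneHull_mono hAB))
  rintro _ ⟨c, hc, b, hb, rfl⟩
  exact map_mem_closure (continuous_const_smul c) (hBA hb) fun a ha => ⟨c, hc, a, ha, rfl⟩

lemma forall_map_closure_coneHull_sub_nonpos_iff (f : Z →L[ℝ] ℝ) (A : Set Z) (x : Z) :
    (∀ y ∈ closure (coneHull (A - {x})), f y ≤ 0) ↔ ∀ a ∈ A, f a ≤ f x := by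
  constructor
  · intro h a ha
    simpa using h (a - x) (subset_closure (subset_coneHull_s15 _ (sub_mem_sub ha rfl)))
  · intro h
    refine closure_minimal ?_ (isClosed_le f.continuous continuous_const)
    rw [sub_singleton]
    rintro _ ⟨c, hc, _, ⟨a, ha, rfl⟩, rfl⟩
    change f (c • (a - x)) ≤ 0
    rw [map_smul, map_sub, smul_eq_mul]
    exact mul_nonpos_of_nonneg_of_nonpos hc (sub_nonpos.2 (h a ha))

lemma convex_closure_coneHull_sub_singleton [IsTopologicalAddGroup Z] [ContinuousConstSMul ℝ Z]
    {C Ω : Set Z} (hC : Convex ℝ C) (hCΩ : C ⊆ Ω) (hΩC : Ω ⊆ closure C) (x : Z) :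
    Convex ℝ (closure (coneHull (Ω - {x}))) := by
  rw [closure_coneHull_eq_of_subset_closure (sub_subset_sub hCΩ Subset.rfl)
    (sub_singleton_subset_closure hΩC x)]
  exact (convex_coneHull (hC.sub (convex_singleton x))).closure

end ClosureConeHull

theorem stmt15 {X : Type*} [AddCommGroup X] [Module ℝ X] [TopologicalSpace X]
    [IsTopologicalAddGroup X] [ContinuousSMul ℝ X] [LocallyConvexSpace ℝ X]
    (Ω : Set X) (h : QuasiNearlyConvex Ω) (xbar : X) (hxbar : xbar ∈ Ω) :
    xbar ∉ qri Ω ↔ ∃ f : X →L[ℝ] ℝ, f ≠ 0 ∧ (∀ x ∈ Ω, f x ≤ f xbar) ∧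
      ∃ xhat ∈ Ω, f xhat < f xbar := by
  obtain ⟨C, hCconv, -, hCΩ, hΩC⟩ := h
  set K := closure (coneHull (Ω - {xbar})) with hK
  have hsupp (f : X →L[ℝ] ℝ) : (∀ y ∈ K, f y ≤ 0) ↔ ∀ x ∈ Ω, f x ≤ f xbar :=
    forall_map_closure_coneHull_sub_nonpos_iff f Ω xbar
  have hmemK (x : X) (hx : x ∈ Ω) : x - xbar ∈ K :=
    subset_closure (subset_coneHull_s15 _ (sub_mem_sub hx rfl))
  constructor
  · intro hnq
    obtain ⟨f, hfK, v, hvK, hfv⟩ := exists_map_nonpos_and_neg_of_not_isLinearSubspace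
      isClosed_closure (convex_closure_coneHull_sub_singleton hCconv hCΩ hΩC xbar)
      (by simpa only [sub_self] using hmemK xbar hxbar)
      (fun _ hc _ => smul_mem_closure_coneHull hc) (fun hlin => hnq ⟨hxbar, hlin⟩)
    refine ⟨f, fun hf => by simp [hf] at hfv, (hsupp f).1 hfK, ?_⟩
    by_contra! hge
    have hfv' := (hsupp (-f)).2 (fun x hx => by simpa using hge x hx) v hvK
    exact hfv.not_ge (by simpa using hfv')
  · rintro ⟨f, -, hle, xhat, hxhat, hlt⟩ ⟨-, L, hL⟩
    rw [← hK] at hL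
    have hmem : xhat - xbar ∈ L := by
      rw [← SetLike.mem_coe, hL]
      exact hmemK xhat hxhat
    have := (hsupp f).2 hle _ (by rw [← hL]; exact L.neg_mem hmem)
    rw [map_neg, map_sub] at this
    linarith
end
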